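/- arXiv:2204.02638 — 5 statements merged into one kernel-verified Lean document; each statement's English description precedes it below -/
import Mathlib

section
/- Let u(p) = λ Σ_{i=1}^{λ} w_i · C(λ−1, i−1) · p^{i−1} (1−p)^{λ−i}. Then ∫₀¹ u(t)² dt = (λ²/(2λ−1)) · Σ_{i=1}^{λ} Σ_{j=1}^{λ} w_i w_j C(λ−1,i−1) C(λ−1,j−1) / C(2λ−2, i+j−2). -/
/-!
Expanding the square, the product of the terms of indices `i` and `j` is a multiple of
`t ^ (i + j) * (1 - t) ^ (2λ - 2 - (i + j))`, and by the Beta integral (obtained by integrating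
by parts) this integrates to `1 / ((2λ - 1) * C(2λ - 2, i + j))`.
-/

open Finset intervalIntegral
open scoped Nat

lemma integral_pow_mul_one_sub_pow_succ (m n : ℕ) :
    ((m : ℝ) + 1) * ∫ x in (0:ℝ)..1, x ^ m * (1 - x) ^ (n + 1)
      = ((n : ℝ) + 1) * ∫ x in (0:ℝ)..1, x ^ (m + 1) * (1 - x) ^ n := by
  have hu : ∀ x ∈ Set.uIcc (0:ℝ) 1,
      HasDerivAt (fun x : ℝ => (1 - x) ^ (n + 1)) (-(((n : ℝ) + 1) * (1 - x) ^ n)) x := by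
    intro x _
    simpa [Function.comp_def] using
      (hasDerivAt_pow (n + 1) (1 - x)).comp x ((hasDerivAt_id x).const_sub 1)
  have hv : ∀ x ∈ Set.uIcc (0:ℝ) 1,
      HasDerivAt (fun x : ℝ => x ^ (m + 1)) (((m : ℝ) + 1) * x ^ m) x := by
    intro x _
    simpa using hasDerivAt_pow (m + 1) x
  have hparts := integral_mul_deriv_eq_deriv_mul hu hv
    (Continuous.intervalIntegrable (by fun_prop) _ _)
    (Continuous.intervalIntegrable (by fun_prop) _ _)
  simp only [sub_self, sub_zero, one_pow, mul_one, zero_pow (Nat.succ_ne_zero _),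
    mul_zero, neg_mul, integral_neg, zero_sub, neg_neg] at hparts
  rw [← integral_const_mul, ← integral_const_mul]
  convert hparts using 2 <;> ext x <;> ring

theorem integral_pow_mul_one_sub_pow (m n : ℕ) :
    ∫ x in (0:ℝ)..1, x ^ m * (1 - x) ^ n = (m ! * n ! : ℝ) / (m + n + 1)! := by
  induction n generalizing m with
  | zero => simp [integral_pow, Nat.factorial_succ]; field_simp
  | succ n ih =>
    have h := integral_pow_mul_one_sub_pow_succ m n
    rw [ih, show m + 1 + n + 1 = m + (n + 1) + 1 by ring] at h
    rw [Nat.factorial_succ m] at h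
    rw [Nat.factorial_succ n]
    push_cast at h ⊢
    have hm : (m : ℝ) + 1 ≠ 0 := by positivity
    field_simp at h ⊢
    linarith

theorem integral_pow_mul_one_sub_pow_sub {N k : ℕ} (hk : k ≤ N) :
    ∫ x in (0:ℝ)..1, x ^ k * (1 - x) ^ (N - k) = ((N + 1) * N.choose k : ℝ)⁻¹ := by
  have hchoose : (N.choose k * k ! * (N - k)! : ℝ) = N ! := by
    exact_mod_cast Nat.choose_mul_factorial_mul_factorial hk
  rw [integral_pow_mul_one_sub_pow, show k + (N - k) + 1 = N + 1 by omega, Nat.factorial_succ,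
    Nat.cast_mul, ← hchoose]
  have : (N.choose k : ℝ) ≠ 0 := by exact_mod_cast (Nat.choose_pos hk).ne'
  field_simp
  push_cast
  ring

theorem integral_sq_sum_pow_mul_one_sub_pow {ι : Type*} (s : Finset ι) (N : ℕ) (e : ι → ℕ)
    (he : ∀ i ∈ s, e i ≤ N) (a : ι → ℝ) :
    ∫ t in (0:ℝ)..1, (∑ i ∈ s, a i * t ^ e i * (1 - t) ^ (N - e i)) ^ 2
      = ∑ i ∈ s, ∑ j ∈ s, a i * a j / ((2 * N + 1) * (2 * N).choose (e i + e j)) := by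
  have hsq : ∀ t : ℝ, (∑ i ∈ s, a i * t ^ e i * (1 - t) ^ (N - e i)) ^ 2
      = ∑ i ∈ s, ∑ j ∈ s, a i * a j * (t ^ (e i + e j) * (1 - t) ^ (2 * N - (e i + e j))) := by
    intro t
    rw [sq, sum_mul_sum]
    refine sum_congr rfl fun i hi => sum_congr rfl fun j hj => ?_
    rw [show 2 * N - (e i + e j) = (N - e i) + (N - e j) by
      have := he i hi; have := he j hj; omega]
    ring
  simp_rw [hsq]
  rw [integral_finsetSum fun i _ => Continuous.intervalIntegrable (by fun_prop) _ _]
  refine sum_congr rfl fun i hi => ?_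
  rw [integral_finsetSum fun j _ => Continuous.intervalIntegrable (by fun_prop) _ _]
  refine sum_congr rfl fun j hj => ?_
  have hij : e i + e j ≤ 2 * N := by have := he i hi; have := he j hj; omega
  rw [integral_const_mul, integral_pow_mul_one_sub_pow_sub hij]
  push_cast
  ring

theorem stmt_3_general (lam : ℕ) (w : Fin lam → ℝ) :
    (∫ t in (0:ℝ)..1, ((lam : ℝ) *
        ∑ i : Fin lam, w i * (Nat.choose (lam - 1) i : ℝ) * t ^ (i : ℕ) * (1 - t) ^ (lam - 1 - i)) ^ 2)
      = (lam : ℝ) ^ 2 / (2 * (lam : ℝ) - 1) *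
        ∑ i : Fin lam, ∑ j : Fin lam, w i * w j *
          (Nat.choose (lam - 1) i : ℝ) * (Nat.choose (lam - 1) j : ℝ) /
          (Nat.choose (2 * lam - 2) ((i : ℕ) + (j : ℕ)) : ℝ) := by
  obtain _ | N := lam
  · simp
  simp only [mul_pow, integral_const_mul, add_tsub_cancel_right,
    show 2 * (N + 1) - 2 = 2 * N by omega]
  rw [integral_sq_sum_pow_mul_one_sub_pow univ N (fun i : Fin (N + 1) => (i : ℕ))
    (fun i _ => Fin.is_le i)]
  simp only [mul_sum]
  refine sum_congr rfl fun i _ => sum_congr rfl fun j _ => ?_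
  push_cast
  simp only [div_eq_mul_inv, mul_inv]
  ring

/-- With `u(p) = λ ∑_{i=1}^{λ} w_i C(λ-1,i-1) p^{i-1} (1-p)^{λ-i}`,
`∫₀¹ u(t)² dt = (λ²/(2λ-1)) ∑_i ∑_j w_i w_j C(λ-1,i-1) C(λ-1,j-1) / C(2λ-2, i+j-2)`. -/
theorem stmt_3 (lam : ℕ) (hlam : 1 ≤ lam) (w : Fin lam → ℝ) :
    (∫ t in (0:ℝ)..1, ((lam : ℝ) *
        ∑ i : Fin lam, w i * (Nat.choose (lam - 1) i : ℝ) * t ^ (i : ℕ) * (1 - t) ^ (lam - 1 - i)) ^ 2)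
      = (lam : ℝ) ^ 2 / (2 * (lam : ℝ) - 1) *
        ∑ i : Fin lam, ∑ j : Fin lam, w i * w j *
          (Nat.choose (lam - 1) i : ℝ) * (Nat.choose (lam - 1) j : ℝ) /
          (Nat.choose (2 * lam - 2) ((i : ℕ) + (j : ℕ)) : ℝ) :=
  stmt_3_general lam w
end

section
/- The derivative of u(p) = λ Σ_{i=1}^{λ} w_i C(λ−1,i−1) p^{i−1}(1−p)^{λ−i} is u'(p) = λ(λ−1) Σ_{k=1}^{λ−1} (w_{k+1} − w_k) C(λ−2,k−1) p^{k−1} (1−p)^{λ−1−k} for all p ∈ (0,1). -/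
/-!
Up to the factor `λ`, `u` is the combination `∑ wᵢ b_{λ-1,i}` of Bernstein basis polynomials
`b_{n,ν} = C(n,ν) X^ν (1 - X)^(n-ν)`. Since `b'_{n,ν} = n (b_{n-1,ν-1} - b_{n-1,ν})`, regrouping the
differentiated sum by the index of `b_{n-1,k}` (summation by parts) turns the weights into their
forward differences `w_{k+1} - w_k`.
-/

open Finset

section

open Polynomial

variable {R : Type*} [CommRing R]

theorem natCast_mul_bernsteinPolynomial_pred_self (n : ℕ) :
    (n : R[X]) * bernsteinPolynomial R (n - 1) n = 0 := by
  cases n with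
  | zero => simp
  | succ m => simp [bernsteinPolynomial.eq_zero_of_lt R (Nat.lt_succ_self m)]

theorem derivative_sum_C_mul_bernsteinPolynomial (n : ℕ) (w : Fin (n + 1) → R) :
    derivative (∑ i : Fin (n + 1), C (w i) * bernsteinPolynomial R n i) =
      n * ∑ k : Fin n, C (w k.succ - w k.castSucc) * bernsteinPolynomial R (n - 1) k := by
  have hsplit : C (w 0) * bernsteinPolynomial R (n - 1) 0 +
        ∑ k : Fin n, C (w k.succ) * bernsteinPolynomial R (n - 1) (k + 1) =
      ∑ k : Fin n, C (w k.castSucc) * bernsteinPolynomial R (n - 1) k +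
        C (w (Fin.last n)) * bernsteinPolynomial R (n - 1) n := by
    simpa using (Fin.sum_univ_succ fun i => C (w i) * bernsteinPolynomial R (n - 1) i).symm.trans
      (Fin.sum_univ_castSucc _)
  rw [Fin.sum_univ_succ, derivative_add, derivative_sum]
  simp only [derivative_C_mul, Fin.val_zero, Fin.val_succ, bernsteinPolynomial.derivative_zero,
    bernsteinPolynomial.derivative_succ, C_sub, sub_mul, sum_sub_distrib, mul_sub,
    mul_left_comm (C _) (n : R[X]), ← mul_sum]
  linear_combination (-(n : R[X])) * hsplit -
    C (w (Fin.last n)) * natCast_mul_bernsteinPolynomial_pred_self (R := R) n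

theorem eval_sum_C_mul_bernsteinPolynomial {m : ℕ} (n : ℕ) (w : Fin m → R) (t : R) :
    (∑ i : Fin m, C (w i) * bernsteinPolynomial R n i).eval t =
      ∑ i : Fin m, w i * (n.choose i : R) * t ^ (i : ℕ) * (1 - t) ^ (n - i) := by
  simp [eval_finsetSum, bernsteinPolynomial, mul_assoc]

end

/-- The derivative of `u(p) = λ ∑_{i=1}^{λ} w_i C(λ-1,i-1) p^{i-1}(1-p)^{λ-i}` at
`p ∈ (0,1)` is `λ(λ-1) ∑_{k=1}^{λ-1} (w_{k+1} - w_k) C(λ-2,k-1) p^{k-1} (1-p)^{λ-1-k}`. -/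
theorem stmt_4 (lam : ℕ) (w : Fin lam → ℝ)
    (p : ℝ) :
    HasDerivAt (fun t : ℝ => (lam : ℝ) *
        ∑ i : Fin lam, w i * (Nat.choose (lam - 1) i : ℝ) * t ^ (i : ℕ) * (1 - t) ^ (lam - 1 - i))
      ((lam : ℝ) * ((lam : ℝ) - 1) *
        ∑ k : Fin (lam - 1),
          (w ⟨(k : ℕ) + 1, by have := k.isLt; omega⟩ - w ⟨(k : ℕ), by have := k.isLt; omega⟩) *
          (Nat.choose (lam - 2) k : ℝ) * p ^ (k : ℕ) * (1 - p) ^ (lam - 2 - k))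
      p := by
  cases lam with
  | zero => simpa using hasDerivAt_const p (0 : ℝ)
  | succ n =>
    have h := ((∑ i, Polynomial.C (w i) * bernsteinPolynomial ℝ n i).hasDerivAt p).const_mul
      ((n + 1 : ℕ) : ℝ)
    simp only [derivative_sum_C_mul_bernsteinPolynomial, Polynomial.eval_mul,
      Polynomial.eval_natCast, eval_sum_C_mul_bernsteinPolynomial] at h
    rw [show ((n + 1 : ℕ) : ℝ) - 1 = n by push_cast; ring, mul_assoc]
    exact h
end

section
/- If w_i ≥ w_{i+1} for all i = 1,...,λ−1 and w_1 > w_λ, then the function u(p) = λ Σ_{i=1}^{λ} w_i C(λ−1,i−1) p^{i−1}(1−p)^{λ−i} is strictly decreasing on [0,1]. -/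
open Finset Polynomial

/-!
In the Bernstein basis, `u(p) / λ` is the polynomial `∑ w_{ν+1} B_{λ-1,ν}(p)`. Differentiating a
Bernstein combination turns its coefficients into their forward differences,
`(∑ a_ν B_{n+1,ν})' = (n+1) ∑ (a_{ν+1} - a_ν) B_{n,ν}`. For nonincreasing weights these differences
are `≤ 0`, and they telescope to `w_λ - w_1 < 0`, so one of them is negative. Since every `B_{n,ν}`
is positive on `(0,1)`, the derivative of `u` is negative there.
-/

theorem bernsteinPolynomial.derivative_sum_smul {R : Type*} [CommRing R] (n : ℕ) (a : ℕ → R) :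
    derivative (∑ ν ∈ range (n + 2), a ν • bernsteinPolynomial R (n + 1) ν) =
      (n + 1 : R[X]) * ∑ ν ∈ range (n + 1), (a (ν + 1) - a ν) • bernsteinPolynomial R n ν := by
  have shift : ∑ ν ∈ range (n + 1), a ν • bernsteinPolynomial R n ν =
      ∑ ν ∈ range (n + 1), a (ν + 1) • bernsteinPolynomial R n (ν + 1) +
        a 0 • bernsteinPolynomial R n 0 := by
    rw [← sum_range_succ' (fun ν => a ν • bernsteinPolynomial R n ν), sum_range_succ _ (n + 1),
      eq_zero_of_lt R n.lt_succ_self, smul_zero, add_zero]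
  simp only [sub_smul, sum_sub_distrib]
  rw [derivative_sum, sum_range_succ', shift]
  simp only [derivative_smul, derivative_succ, derivative_zero, Nat.add_sub_cancel]
  simp only [smul_eq_C_mul, mul_left_comm (C _), mul_sub, sum_sub_distrib, ← mul_sum]
  push_cast
  ring

theorem bernsteinPolynomial.eval_pos {n ν : ℕ} (h : ν ≤ n) {x : ℝ} (hx : x ∈ Set.Ioo 0 1) :
    0 < (bernsteinPolynomial ℝ n ν).eval x := by
  have := Nat.choose_pos h
  have := hx.1
  have := sub_pos.2 hx.2
  simp only [bernsteinPolynomial, eval_mul, eval_pow, eval_sub, eval_one, eval_X, eval_natCast]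
  positivity

theorem eval_sum_smul_bernsteinPolynomial_neg {n : ℕ} {b : ℕ → ℝ} {x : ℝ} (hx : x ∈ Set.Ioo 0 1)
    (hb : ∀ ν ∈ range (n + 1), b ν ≤ 0) (hneg : ∃ ν ∈ range (n + 1), b ν < 0) :
    (∑ ν ∈ range (n + 1), b ν • bernsteinPolynomial ℝ n ν).eval x < 0 := by
  have hB : ∀ ν ∈ range (n + 1), 0 < (bernsteinPolynomial ℝ n ν).eval x := fun ν hν =>
    bernsteinPolynomial.eval_pos (Nat.lt_succ_iff.1 (mem_range.1 hν)) hx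
  simp only [eval_finsetSum, eval_smul, smul_eq_mul]
  refine sum_neg' (fun ν hν => mul_nonpos_of_nonpos_of_nonneg (hb ν hν) (hB ν hν).le) ?_
  obtain ⟨ν, hν, hbν⟩ := hneg
  exact ⟨ν, hν, mul_neg_of_neg_of_pos hbν (hB ν hν)⟩

theorem strictAntiOn_eval_sum_smul_bernsteinPolynomial {n : ℕ} {a : ℕ → ℝ}
    (ha : AntitoneOn a (Set.Iic n)) (h : a n < a 0) :
    StrictAntiOn (fun x => (∑ ν ∈ range (n + 1), a ν • bernsteinPolynomial ℝ n ν).eval x)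
      (Set.Icc 0 1) := by
  obtain ⟨m, rfl⟩ : ∃ m, n = m + 1 :=
    Nat.exists_eq_add_one.2 (Nat.pos_of_ne_zero (by rintro rfl; exact h.false))
  refine strictAntiOn_of_deriv_neg (convex_Icc 0 1) (Polynomial.continuousOn _) fun x hx => ?_
  rw [interior_Icc] at hx
  rw [Polynomial.deriv, bernsteinPolynomial.derivative_sum_smul, eval_mul]
  refine mul_neg_of_pos_of_neg (by simp only [eval_add, eval_natCast, eval_one]; positivity)
    (eval_sum_smul_bernsteinPolynomial_neg hx (fun ν hν => ?_) ?_)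
  · have hν : ν ≤ m := Nat.lt_succ_iff.1 (mem_range.1 hν)
    exact sub_nonpos.2 (ha (Set.mem_Iic.2 (by omega)) (Set.mem_Iic.2 (by omega)) ν.le_succ)
  · refine exists_lt_of_sum_lt (g := fun _ => (0 : ℝ)) ?_
    rw [sum_range_sub, sum_const_zero]
    exact sub_neg.2 h

/-- If the weights are nonincreasing and not all equal (`w 1 > w λ`), then
`u(p) = λ ∑_{i=1}^{λ} w_i C(λ-1,i-1) p^{i-1}(1-p)^{λ-i}` is strictly decreasing on `[0,1]`. -/
theorem stmt_5 (lam : ℕ) (hlam : 2 ≤ lam) (w : Fin lam → ℝ)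
    (hmono : ∀ i j : Fin lam, i ≤ j → w j ≤ w i)
    (hstrict : w ⟨0, by omega⟩ > w ⟨lam - 1, by omega⟩) :
    StrictAntiOn (fun t : ℝ => (lam : ℝ) *
        ∑ i : Fin lam, w i * (Nat.choose (lam - 1) i : ℝ) * t ^ (i : ℕ) * (1 - t) ^ (lam - 1 - i))
      (Set.Icc (0:ℝ) 1) := by
  obtain ⟨n, rfl⟩ : ∃ n, lam = n + 1 := ⟨lam - 1, by omega⟩
  set a : ℕ → ℝ := fun i => w ⟨min i n, by omega⟩
  have hwa : ∀ i : Fin (n + 1), w i = a i := fun i =>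
    congrArg w (Fin.ext (min_eq_left (Nat.lt_succ_iff.1 i.2)).symm)
  have ha : Antitone a := fun i j hij => hmono _ _ (Fin.mk_le_mk.2 (min_le_min_right n hij))
  have h : a n < a 0 := by simpa [hwa] using hstrict
  have hu : ∀ t : ℝ, ∑ i : Fin (n + 1),
      w i * ((n + 1 - 1).choose i : ℝ) * t ^ (i : ℕ) * (1 - t) ^ (n + 1 - 1 - i) =
        (∑ ν ∈ range (n + 1), a ν • bernsteinPolynomial ℝ n ν).eval t := fun t => by
    simp only [hwa, Nat.add_sub_cancel, eval_finsetSum, eval_smul, smul_eq_mul, bernsteinPolynomial,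
      eval_mul, eval_pow, eval_sub, eval_one, eval_X, eval_natCast, mul_assoc]
    exact Fin.sum_univ_eq_sum_range (fun i => a i * (n.choose i * (t ^ i * (1 - t) ^ (n - i)))) _
  intro x hx y hy hxy
  simp only [hu]
  exact mul_lt_mul_of_pos_left
    (strictAntiOn_eval_sum_smul_bernsteinPolynomial (ha.antitoneOn _) h hx hy hxy) (by positivity)
end

section
/- Let u : [0,1] → ℝ be L-Lipschitz, and let A = P[f(X) < f(x) | x] and B = P[g(X) < g(x) | x] where X is an independent copy of x with common law P, and all level sets of f and g have P-measure zero. Then for every s ≥ 1, E_x[|u(A) − u(B)|^s]^{1/s} ≤ L · ((1 − τ)/2)^{1/s}, where τ is the population Kendall rank correlation between f and g under P. -/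
open MeasureTheory ProbabilityTheory

lemma half_lemma {E : Type*} [MeasurableSpace E] (μ : Measure E) [IsProbabilityMeasure μ]
    (f : E → ℝ) (hf : Measurable f) (hfatom : ∀ t : ℝ, μ {x | f x = t} = 0) :
    ((μ.prod μ) {p : E × E | f p.2 < f p.1}).toReal = 1/2 := by
  have hSf : MeasurableSet {p : E × E | f p.2 < f p.1} :=
    measurableSet_lt (hf.comp measurable_snd) (hf.comp measurable_fst)
  have hSf' : MeasurableSet {p : E × E | f p.1 < f p.2} :=
    measurableSet_lt (hf.comp measurable_fst) (hf.comp measurable_snd)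
  have hSe : MeasurableSet {p : E × E | f p.2 = f p.1} :=
    measurableSet_eq_fun (hf.comp measurable_snd) (hf.comp measurable_fst)
  -- diagonal has measure zero
  have hc : (μ.prod μ) {p : E × E | f p.2 = f p.1} = 0 := by
    rw [Measure.prod_apply hSe]
    have : ∀ x, μ (Prod.mk x ⁻¹' {p : E × E | f p.2 = f p.1}) = 0 := by
      intro x
      have : Prod.mk x ⁻¹' {p : E × E | f p.2 = f p.1} = {y | f y = f x} := rfl
      rw [this]; exact hfatom (f x)
    simp only [Set.preimage_setOf_eq] at this ⊢
    rw [lintegral_congr (fun x => this x)]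
    simp
  -- swap symmetry
  have hb : (μ.prod μ) {p : E × E | f p.1 < f p.2} = (μ.prod μ) {p : E × E | f p.2 < f p.1} := by
    have h1 : (μ.prod μ) {p : E × E | f p.1 < f p.2}
        = (Measure.map Prod.swap (μ.prod μ)) {p : E × E | f p.2 < f p.1} := by
      rw [Measure.map_apply measurable_swap hSf]
      rfl
    rw [h1, Measure.prod_swap]
  -- partition
  have hdisj1 : Disjoint {p : E × E | f p.2 < f p.1} {p : E × E | f p.1 < f p.2} := by
    rw [Set.disjoint_left]; intro p hp hp'
    simp only [Set.mem_setOf_eq] at hp hp'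
    exact absurd hp' (not_lt.2 hp.le)
  have hdisj2 : Disjoint ({p : E × E | f p.2 < f p.1} ∪ {p : E × E | f p.1 < f p.2})
      {p : E × E | f p.2 = f p.1} := by
    rw [Set.disjoint_left]; intro p hp hp'
    simp only [Set.mem_union, Set.mem_setOf_eq] at hp hp'
    rcases hp with h | h
    · exact absurd hp' (ne_of_lt h)
    · exact absurd hp' (ne_of_gt h)
  have hcover : ({p : E × E | f p.2 < f p.1} ∪ {p : E × E | f p.1 < f p.2})
      ∪ {p : E × E | f p.2 = f p.1} = Set.univ := by
    ext p; simp only [Set.mem_union, Set.mem_setOf_eq, Set.mem_univ, iff_true]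
    rcases lt_trichotomy (f p.2) (f p.1) with h | h | h
    · exact Or.inl (Or.inl h)
    · exact Or.inr h
    · exact Or.inl (Or.inr h)
  have hsum : (μ.prod μ) {p : E × E | f p.2 < f p.1} + (μ.prod μ) {p : E × E | f p.1 < f p.2}
      = 1 := by
    have h1 := measure_union (μ := μ.prod μ) hdisj2 hSe
    rw [hcover] at h1
    rw [measure_union hdisj1 hSf'] at h1
    rw [hc, add_zero] at h1
    rw [← h1, measure_univ]
  rw [hb] at hsum
  have hfin : (μ.prod μ) {p : E × E | f p.2 < f p.1} ≠ ⊤ := measure_ne_top _ _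
  have := congrArg ENNReal.toReal hsum
  rw [ENNReal.toReal_add hfin hfin] at this
  simp only [ENNReal.toReal_one] at this
  linarith

/-- For `u` Lipschitz with constant `L` on `[0,1]`, `A(x) = P[f(X) < f(x)]`,
`B(x) = P[g(X) < g(x)]`, and `τ` the population Kendall rank correlation between `f`
and `g` under `μ`, for every `s ≥ 1`:
`E_x[|u(A(x)) - u(B(x))|^s]^{1/s} ≤ L · ((1 - τ)/2)^{1/s}`. -/
theorem stmt_8 {d : ℕ} (μ : Measure (Fin d → ℝ)) [IsProbabilityMeasure μ]
    (f g : (Fin d → ℝ) → ℝ) (hf : Measurable f) (hg : Measurable g)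
    (hfatom : ∀ t : ℝ, μ {x | f x = t} = 0) (hgatom : ∀ t : ℝ, μ {x | g x = t} = 0)
    (u : ℝ → ℝ) (L : NNReal) (hu : LipschitzOnWith L u (Set.Icc 0 1))
    (τ : ℝ)
    (hτ : τ = 4 * ((μ.prod μ) {p | f p.2 < f p.1 ∧ g p.2 < g p.1}).toReal - 1)
    (s : ℝ) (hs : 1 ≤ s) :
    (∫ x, |u ((μ {y | f y < f x}).toReal) - u ((μ {y | g y < g x}).toReal)| ^ s ∂μ) ^ (1 / s)
      ≤ (L : ℝ) * ((1 - τ) / 2) ^ (1 / s) := by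
  have hs0 : (0:ℝ) < s := lt_of_lt_of_le one_pos hs
  set Sf : Set ((Fin d → ℝ) × (Fin d → ℝ)) := {p | f p.2 < f p.1} with hSf_def
  set Sg : Set ((Fin d → ℝ) × (Fin d → ℝ)) := {p | g p.2 < g p.1} with hSg_def
  have hSfm : MeasurableSet Sf :=
    measurableSet_lt (hf.comp measurable_snd) (hf.comp measurable_fst)
  have hSgm : MeasurableSet Sg :=
    measurableSet_lt (hg.comp measurable_snd) (hg.comp measurable_fst)
  set S : Set ((Fin d → ℝ) × (Fin d → ℝ)) := (Sf \ Sg) ∪ (Sg \ Sf) with hS_def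
  have hSm : MeasurableSet S := (hSfm.diff hSgm).union (hSgm.diff hSfm)
  have hInter : {p : (Fin d → ℝ) × (Fin d → ℝ) | f p.2 < f p.1 ∧ g p.2 < g p.1} = Sf ∩ Sg := rfl
  have hfhalf := half_lemma μ f hf hfatom
  have hghalf := half_lemma μ g hg hgatom
  -- measure of S equals (1 - τ)/2
  have e1 : (μ.prod μ) (Sf ∩ Sg) + (μ.prod μ) (Sf \ Sg) = (μ.prod μ) Sf :=
    measure_inter_add_diff Sf hSgm
  have e2 : (μ.prod μ) (Sg ∩ Sf) + (μ.prod μ) (Sg \ Sf) = (μ.prod μ) Sg :=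
    measure_inter_add_diff Sg hSfm
  have e3 : (μ.prod μ) S = (μ.prod μ) (Sf \ Sg) + (μ.prod μ) (Sg \ Sf) :=
    measure_union disjoint_sdiff_sdiff (hSgm.diff hSfm)
  have e1' := congrArg ENNReal.toReal e1
  have e2' := congrArg ENNReal.toReal e2
  have e3' := congrArg ENNReal.toReal e3
  rw [ENNReal.toReal_add (measure_ne_top _ _) (measure_ne_top _ _)] at e1' e2'
  rw [ENNReal.toReal_add (measure_ne_top _ _) (measure_ne_top _ _)] at e3'
  rw [Set.inter_comm] at e2'
  have hD : ((μ.prod μ) S).toReal = (1 - τ) / 2 := by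
    rw [hτ, hInter]
    rw [e3']
    rw [hfhalf] at e1'
    rw [hghalf] at e2'
    linarith
  have hτnn : 0 ≤ (1 - τ) / 2 := hD ▸ ENNReal.toReal_nonneg
  -- integral identity for the slices of S
  have hslice_meas : Measurable fun x => μ (Prod.mk x ⁻¹' S) :=
    measurable_measure_prodMk_left hSm
  have hint_eq : ∫ x, (μ (Prod.mk x ⁻¹' S)).toReal ∂μ = ((μ.prod μ) S).toReal := by
    rw [integral_toReal hslice_meas.aemeasurable
      (Filter.Eventually.of_forall fun x => measure_lt_top μ _), ← Measure.prod_apply hSm]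
  -- pointwise bound
  have hpt : ∀ x, |u ((μ {y | f y < f x}).toReal) - u ((μ {y | g y < g x}).toReal)| ^ s
      ≤ (L:ℝ)^s * (μ (Prod.mk x ⁻¹' S)).toReal := by
    intro x
    set a := (μ {y | f y < f x}).toReal with ha_def
    set b := (μ {y | g y < g x}).toReal with hb_def
    have ha0 : 0 ≤ a := ENNReal.toReal_nonneg
    have hb0 : 0 ≤ b := ENNReal.toReal_nonneg
    have ha1 : a ≤ 1 := by
      have := ENNReal.toReal_mono ENNReal.one_ne_top (prob_le_one (μ := μ) (s := {y | f y < f x}))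
      simpa using this
    have hb1 : b ≤ 1 := by
      have := ENNReal.toReal_mono ENNReal.one_ne_top (prob_le_one (μ := μ) (s := {y | g y < g x}))
      simpa using this
    have hdist : |u a - u b| ≤ (L:ℝ) * |a - b| := by
      have := hu.dist_le_mul a ⟨ha0, ha1⟩ b ⟨hb0, hb1⟩
      rwa [Real.dist_eq, Real.dist_eq] at this
    have hab1 : |a - b| ≤ 1 := abs_le.2 ⟨by linarith, by linarith⟩
    have hslice : Prod.mk x ⁻¹' S
        = ({y | f y < f x} \ {y | g y < g x}) ∪ ({y | g y < g x} \ {y | f y < f x}) := rfl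
    have habs : |a - b| ≤ (μ (Prod.mk x ⁻¹' S)).toReal := by
      rw [hslice]
      have key : ∀ (F G : Set (Fin d → ℝ)), (μ F).toReal ≤ (μ G).toReal + (μ (F \ G)).toReal := by
        intro F G
        have hmono : μ F ≤ μ G + μ (F \ G) := by
          calc μ F ≤ μ (G ∪ (F \ G)) := measure_mono (fun y hy => by
                by_cases hgy : y ∈ G
                · exact Or.inl hgy
                · exact Or.inr ⟨hy, hgy⟩)
            _ ≤ μ G + μ (F \ G) := measure_union_le _ _
        calc (μ F).toReal ≤ (μ G + μ (F \ G)).toReal :=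
              ENNReal.toReal_mono (by finiteness) hmono
          _ = (μ G).toReal + (μ (F \ G)).toReal :=
              ENNReal.toReal_add (measure_ne_top _ _) (measure_ne_top _ _)
      have h1 := key {y | f y < f x} {y | g y < g x}
      have h2 := key {y | g y < g x} {y | f y < f x}
      have hm1 : (μ ({y | f y < f x} \ {y | g y < g x})).toReal
          ≤ (μ (({y | f y < f x} \ {y | g y < g x}) ∪ ({y | g y < g x} \ {y | f y < f x}))).toReal :=
        ENNReal.toReal_mono (measure_ne_top _ _) (measure_mono Set.subset_union_left)
      have hm2 : (μ ({y | g y < g x} \ {y | f y < f x})).toReal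
          ≤ (μ (({y | f y < f x} \ {y | g y < g x}) ∪ ({y | g y < g x} \ {y | f y < f x}))).toReal :=
        ENNReal.toReal_mono (measure_ne_top _ _) (measure_mono Set.subset_union_right)
      exact abs_le.2 ⟨by rw [← ha_def, ← hb_def] at h1 h2; linarith,
        by rw [← ha_def, ← hb_def] at h1 h2; linarith⟩
    have habss : |a - b| ^ s ≤ |a - b| := by
      rcases eq_or_lt_of_le (abs_nonneg (a - b)) with h0 | h0
      · rw [← h0, Real.zero_rpow (ne_of_gt hs0)]
      · have h := Real.rpow_le_rpow_of_exponent_ge h0 hab1 hs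
        rwa [Real.rpow_one] at h
    calc |u a - u b| ^ s ≤ ((L:ℝ) * |a - b|) ^ s :=
          Real.rpow_le_rpow (abs_nonneg _) hdist hs0.le
      _ = (L:ℝ)^s * |a - b|^s := Real.mul_rpow L.coe_nonneg (abs_nonneg _)
      _ ≤ (L:ℝ)^s * |a - b| :=
          mul_le_mul_of_nonneg_left habss (Real.rpow_nonneg L.coe_nonneg s)
      _ ≤ (L:ℝ)^s * (μ (Prod.mk x ⁻¹' S)).toReal :=
          mul_le_mul_of_nonneg_left habs (Real.rpow_nonneg L.coe_nonneg s)
  -- integrability of dominating function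
  have hdom : Integrable (fun x => (L:ℝ)^s * (μ (Prod.mk x ⁻¹' S)).toReal) μ := by
    apply Integrable.const_mul
    refine ⟨hslice_meas.ennreal_toReal.aestronglyMeasurable, ?_⟩
    apply HasFiniteIntegral.of_bounded (C := (1:ℝ))
    refine Filter.Eventually.of_forall fun x => ?_
    rw [Real.norm_eq_abs, abs_of_nonneg ENNReal.toReal_nonneg]
    have := ENNReal.toReal_mono ENNReal.one_ne_top (prob_le_one (μ := μ) (s := Prod.mk x ⁻¹' S))
    simpa using this
  have hmain : (∫ x, |u ((μ {y | f y < f x}).toReal) - u ((μ {y | g y < g x}).toReal)| ^ s ∂μ)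
      ≤ (L:ℝ)^s * ((1 - τ) / 2) := by
    calc (∫ x, |u ((μ {y | f y < f x}).toReal) - u ((μ {y | g y < g x}).toReal)| ^ s ∂μ)
        ≤ ∫ x, (L:ℝ)^s * (μ (Prod.mk x ⁻¹' S)).toReal ∂μ :=
          integral_mono_of_nonneg
            (Filter.Eventually.of_forall fun x => Real.rpow_nonneg (abs_nonneg _) s)
            hdom (Filter.Eventually.of_forall hpt)
      _ = (L:ℝ)^s * ∫ x, (μ (Prod.mk x ⁻¹' S)).toReal ∂μ := integral_const_mul _ _
      _ = (L:ℝ)^s * ((1 - τ) / 2) := by rw [hint_eq, hD]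
  have hInt_nn : 0 ≤ ∫ x, |u ((μ {y | f y < f x}).toReal) - u ((μ {y | g y < g x}).toReal)| ^ s ∂μ :=
    integral_nonneg fun x => Real.rpow_nonneg (abs_nonneg _) s
  calc (∫ x, |u ((μ {y | f y < f x}).toReal) - u ((μ {y | g y < g x}).toReal)| ^ s ∂μ) ^ (1/s)
      ≤ ((L:ℝ)^s * ((1 - τ) / 2)) ^ (1/s) :=
        Real.rpow_le_rpow hInt_nn hmain (by positivity)
    _ = ((L:ℝ)^s)^(1/s) * ((1 - τ) / 2)^(1/s) :=
        Real.mul_rpow (Real.rpow_nonneg L.coe_nonneg s) hτnn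
    _ = (L:ℝ) * ((1 - τ) / 2)^(1/s) := by
        rw [← Real.rpow_mul L.coe_nonneg, mul_one_div_cancel (ne_of_gt hs0), Real.rpow_one]
end

section
/- Let X and Y be i.i.d. real random variables with finite fourth moment, and let Z = X − E[X] with E[Z²] > 0. Then E[|X − Y|] ≥ 2 (E[Z²]³ / (E[Z⁴] + 3 E[Z²]²))^{1/2}. -/
open MeasureTheory ProbabilityTheory Finset

/-!
Put `D = X - Y`. Expanding binomially and using independence, `E[D²] = 2E[Z²]` and
`E[D⁴] = 2E[Z⁴] + 6E[Z²]²`. The bound is then the moment interpolation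
`E[D²]³ ≤ E[|D|]² E[D⁴]`, obtained by integrating the pointwise inequality
`3a²b x² ≤ 2a³|x| + b³x⁴` (for `a, b ≥ 0` the difference is `|x| (b|x| - a)² (b|x| + 2a)`)
at `a = E[D²]`, `b = E[|D|]`.
-/

lemma three_mul_sq_mul_mul_sq_le {a b : ℝ} (ha : 0 ≤ a) (hb : 0 ≤ b) (x : ℝ) :
    3 * a ^ 2 * b * x ^ 2 ≤ 2 * a ^ 3 * |x| + b ^ 3 * x ^ 4 := by
  have key : 0 ≤ |x| * (b * |x| - a) ^ 2 * (b * |x| + 2 * a) := by positivity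
  have h2 : x ^ 2 = |x| ^ 2 := (sq_abs x).symm
  have h4 : x ^ 4 = |x| ^ 4 := by rw [← abs_pow]; exact (abs_of_nonneg (by positivity)).symm
  rw [h2, h4]
  nlinarith [key]

namespace MeasureTheory

variable {α : Type*} [MeasurableSpace α] {μ : Measure α}

lemma memLp_four_of_integrable_pow_four {f : α → ℝ} (hf : AEStronglyMeasurable f μ)
    (h : Integrable (fun x => f x ^ 4) μ) : MemLp f 4 μ := by
  rw [← integrable_norm_rpow_iff hf (by norm_num) (by norm_num)]
  refine h.congr (.of_forall fun x => ?_)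
  simp [Real.norm_eq_abs, ← abs_pow, abs_of_nonneg (by positivity : 0 ≤ f x ^ 4)]

lemma MemLp.integrable_pow_of_le [IsFiniteMeasure μ] {f : α → ℝ} {n k : ℕ} (hf : MemLp f n μ)
    (hk : k ≤ n) : Integrable (fun x => f x ^ k) μ := by
  refine (integrable_norm_iff (f := fun x => f x ^ k) (hf.1.pow k)).mp ?_
  simpa only [norm_pow] using integrable_norm_pow_of_le hf.1 hk hf.integrable_norm_pow'

theorem pow_three_integral_sq_le {f : α → ℝ} (hf1 : Integrable f μ)
    (hf2 : Integrable (fun x => f x ^ 2) μ) (hf4 : Integrable (fun x => f x ^ 4) μ) :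
    (∫ x, f x ^ 2 ∂μ) ^ 3 ≤ (∫ x, |f x| ∂μ) ^ 2 * ∫ x, f x ^ 4 ∂μ := by
  have ha₄ : 0 ≤ ∫ x, f x ^ 4 ∂μ := integral_nonneg fun x => by positivity
  rcases (integral_nonneg fun x => abs_nonneg (f x) : 0 ≤ ∫ x, |f x| ∂μ).eq_or_lt with h₁ | h₁
  · have hf0 : (fun x => |f x|) =ᵐ[μ] 0 :=
      (integral_eq_zero_iff_of_nonneg (fun x => abs_nonneg _) hf1.abs).mp h₁.symm
    have : ∫ x, f x ^ 2 ∂μ = 0 := integral_eq_zero_of_ae <| hf0.mono fun x hx => by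
      simp only [Pi.zero_apply, abs_eq_zero] at hx
      simp [hx]
    rw [this, zero_pow three_ne_zero]
    positivity
  set a₁ := ∫ x, |f x| ∂μ
  set a₂ := ∫ x, f x ^ 2 ∂μ
  set a₄ := ∫ x, f x ^ 4 ∂μ
  have ha₂ : 0 ≤ a₂ := integral_nonneg fun x => sq_nonneg _
  have hmean : 3 * a₂ ^ 2 * a₁ * a₂ ≤ 2 * a₂ ^ 3 * a₁ + a₁ ^ 3 * a₄ := by
    calc 3 * a₂ ^ 2 * a₁ * a₂ = ∫ x, 3 * a₂ ^ 2 * a₁ * f x ^ 2 ∂μ := (integral_const_mul _ _).symm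
      _ ≤ ∫ x, (2 * a₂ ^ 3 * |f x| + a₁ ^ 3 * f x ^ 4) ∂μ :=
        integral_mono (hf2.const_mul _) ((hf1.abs.const_mul _).add (hf4.const_mul _))
          fun x => three_mul_sq_mul_mul_sq_le ha₂ h₁.le (f x)
      _ = 2 * a₂ ^ 3 * a₁ + a₁ ^ 3 * a₄ := by
        rw [integral_add (hf1.abs.const_mul _) (hf4.const_mul _), integral_const_mul,
          integral_const_mul]
  have : a₁ * a₂ ^ 3 ≤ a₁ * (a₁ ^ 2 * a₄) := by nlinarith
  exact le_of_mul_le_mul_left this h₁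

end MeasureTheory

namespace ProbabilityTheory

variable {Ω : Type*} [MeasurableSpace Ω] {μ : Measure Ω} {U W X Y : Ω → ℝ}

theorem IndepFun.integral_add_pow [IsFiniteMeasure μ] (h : IndepFun U W μ) {n : ℕ}
    (hU : MemLp U n μ) (hW : MemLp W n μ) :
    ∫ ω, (U ω + W ω) ^ n ∂μ =
      ∑ k ∈ range (n + 1), (∫ ω, U ω ^ k ∂μ) * (∫ ω, W ω ^ (n - k) ∂μ) * n.choose k := by
  simp_rw [add_pow]
  rw [integral_finsetSum]
  · refine sum_congr rfl fun k _ => ?_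
    rw [integral_mul_const]
    congr 1
    exact h.integral_fun_comp_mul_comp hU.1.aemeasurable hW.1.aemeasurable
      (f := fun x => x ^ k) (g := fun x => x ^ (n - k)) (by fun_prop) (by fun_prop)
  · intro k hk
    have hk : k ≤ n := Nat.lt_succ_iff.mp (mem_range.mp hk)
    exact ((h.comp (measurable_id.pow_const k) (measurable_id.pow_const (n - k))).integrable_mul
      (hU.integrable_pow_of_le hk) (hW.integrable_pow_of_le (Nat.sub_le n k))).mul_const _

lemma IdentDistrib.integral_const_sub_pow_of_even (hXY : IdentDistrib X Y μ μ) (m : ℝ) {k : ℕ}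
    (hk : Even k) : ∫ ω, (m - Y ω) ^ k ∂μ = ∫ ω, (X ω - m) ^ k ∂μ := by
  refine (hXY.comp (u := fun x => (m - x) ^ k) (by fun_prop)).integral_eq.symm.trans ?_
  congr! 2 with ω
  rw [Function.comp_apply, ← neg_sub, hk.neg_pow]

variable [IsProbabilityMeasure μ]

theorem IndepFun.integral_add_sq (h : IndepFun U W μ) (hU : MemLp U 2 μ) (hW : MemLp W 2 μ)
    (hU0 : ∫ ω, U ω ∂μ = 0) :
    ∫ ω, (U ω + W ω) ^ 2 ∂μ = ∫ ω, U ω ^ 2 ∂μ + ∫ ω, W ω ^ 2 ∂μ := by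
  rw [h.integral_add_pow hU hW]
  simp [sum_range_succ, hU0]
  ring

theorem IndepFun.integral_add_pow_four (h : IndepFun U W μ) (hU : MemLp U 4 μ) (hW : MemLp W 4 μ)
    (hU0 : ∫ ω, U ω ∂μ = 0) (hW0 : ∫ ω, W ω ∂μ = 0) :
    ∫ ω, (U ω + W ω) ^ 4 ∂μ =
      ∫ ω, U ω ^ 4 ∂μ + 6 * (∫ ω, U ω ^ 2 ∂μ) * (∫ ω, W ω ^ 2 ∂μ) + ∫ ω, W ω ^ 4 ∂μ := by
  rw [h.integral_add_pow hU hW]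
  simp [sum_range_succ, hU0, hW0, Nat.choose]
  ring

theorem IndepFun.integral_sub_sq_of_identDistrib (h : IndepFun X Y μ)
    (hXY : IdentDistrib X Y μ μ) (hX : MemLp X 2 μ) :
    ∫ ω, (X ω - Y ω) ^ 2 ∂μ = 2 * ∫ ω, (X ω - μ[X]) ^ 2 ∂μ := by
  have hUW : IndepFun (fun ω => X ω - μ[X]) (fun ω => μ[X] - Y ω) μ :=
    h.comp (measurable_id.sub_const _) (measurable_const.sub measurable_id)
  have hU0 : ∫ ω, (X ω - μ[X]) ∂μ = 0 := by simpa [centralMoment] using centralMoment_one (X := X)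
  have := hUW.integral_add_sq (hX.sub (memLp_const _))
    ((memLp_const _).sub (hXY.memLp_iff.mp hX)) hU0
  simp only [sub_add_sub_cancel] at this
  rw [this, hXY.integral_const_sub_pow_of_even _ even_two]
  ring

theorem IndepFun.integral_sub_pow_four_of_identDistrib (h : IndepFun X Y μ)
    (hXY : IdentDistrib X Y μ μ) (hX : MemLp X 4 μ) :
    ∫ ω, (X ω - Y ω) ^ 4 ∂μ =
      2 * ∫ ω, (X ω - μ[X]) ^ 4 ∂μ + 6 * (∫ ω, (X ω - μ[X]) ^ 2 ∂μ) ^ 2 := by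
  have hY : MemLp Y 4 μ := hXY.memLp_iff.mp hX
  have hUW : IndepFun (fun ω => X ω - μ[X]) (fun ω => μ[X] - Y ω) μ :=
    h.comp (measurable_id.sub_const _) (measurable_const.sub measurable_id)
  have hU0 : ∫ ω, (X ω - μ[X]) ∂μ = 0 := by simpa [centralMoment] using centralMoment_one (X := X)
  have hW0 : ∫ ω, (μ[X] - Y ω) ∂μ = 0 := by
    simp [integral_sub (integrable_const _) (hY.integrable (by norm_num)), hXY.integral_eq]
  have := hUW.integral_add_pow_four (hX.sub (memLp_const _)) ((memLp_const _).sub hY) hU0 hW0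
  simp only [sub_add_sub_cancel] at this
  rw [this, hXY.integral_const_sub_pow_of_even _ even_two,
    hXY.integral_const_sub_pow_of_even _ (by decide : Even 4)]
  ring

end ProbabilityTheory

/-- Fourth-moment lower bound on the mean absolute difference of two i.i.d. random
variables: with `Z = X - E[X]`, `E|X - Y| ≥ 2 (E[Z²]³ / (E[Z⁴] + 3E[Z²]²))^{1/2}`. -/
theorem stmt_14 {Ω : Type*} [MeasurableSpace Ω] (P : Measure Ω) [IsProbabilityMeasure P]
    (X Y : Ω → ℝ) (hX : Measurable X) (hY : Measurable Y)
    (hindep : IndepFun X Y P) (hid : Measure.map X P = Measure.map Y P)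
    (hint : Integrable (fun ω => (X ω) ^ 4) P)
    (m z2 z4 : ℝ) (hm : m = ∫ ω, X ω ∂P)
    (hz2 : z2 = ∫ ω, (X ω - m) ^ 2 ∂P) (hz4 : z4 = ∫ ω, (X ω - m) ^ 4 ∂P)
    (hz2pos : 0 < z2) :
    2 * Real.sqrt (z2 ^ 3 / (z4 + 3 * z2 ^ 2)) ≤ ∫ ω, |X ω - Y ω| ∂P := by
  have hXY : IdentDistrib X Y P P := ⟨hX.aemeasurable, hY.aemeasurable, hid⟩
  have hX4 : MemLp X 4 P := memLp_four_of_integrable_pow_four hX.aestronglyMeasurable hint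
  have hD : MemLp (fun ω => X ω - Y ω) 4 P := hX4.sub (hXY.memLp_iff.mp hX4)
  have key := pow_three_integral_sq_le (hD.integrable (by norm_num))
    (hD.integrable_pow_of_le (by norm_num)) (hD.integrable_pow_of_le le_rfl)
  rw [hindep.integral_sub_sq_of_identDistrib hXY (hX4.mono_exponent (by norm_num)),
    hindep.integral_sub_pow_four_of_identDistrib hXY hX4, ← hm, ← hz2, ← hz4] at key
  have hz4 : 0 ≤ z4 := hz4 ▸ integral_nonneg fun ω => by positivity
  rw [← le_div_iff₀' two_pos, Real.sqrt_le_iff, div_le_iff₀ (by positivity)]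
  exact ⟨by positivity, by nlinarith⟩
end
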